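/- arXiv:2305.01227 — 8 statements merged into one kernel-verified Lean document; each statement's English description precedes it below -/
import Mathlib

section
/- For the power distribution with cdf F(y) = y^θ on (0,1), θ > 0, and weight w(y) = y^m with m > 0, the general weighted extropy of minRSSU of size n equals -((n!)² θ^n / 2) ∏_{i=1}^n B((m+θ-1)/θ + 1, 2i-1), where B(a,b) is the Beta function. -/
/-!
With `F⁻¹(u) = u^(1/θ)`, the integrand `w(F⁻¹(u)) f(F⁻¹(u)) = θ u^(m/θ) u^((θ-1)/θ)` collapses to
`θ u^((m+θ-1)/θ)`, so the `i`-th factor of the product is `θ` times the Beta integral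
`B((m+θ-1)/θ + 1, 2i-1)`.
-/

open MeasureTheory

/-- Beta function B(a,b) = ∫₀¹ u^{a-1} (1-u)^{b-1} du. -/
noncomputable def betaFn (a b : ℝ) : ℝ :=
  ∫ u in Set.Ioo (0:ℝ) 1, u ^ (a - 1) * (1 - u) ^ (b - 1)

open Set

lemma rpow_one_div_rpow_mul_rpow_sub_one {u : ℝ} (hu : 0 < u) (θ m : ℝ) :
    (u ^ (1 / θ)) ^ m * (θ * (u ^ (1 / θ)) ^ (θ - 1)) = θ * u ^ ((m + θ - 1) / θ) := by
  rw [← Real.rpow_mul hu.le, ← Real.rpow_mul hu.le, mul_left_comm, ← Real.rpow_add hu]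
  congr 2
  ring

lemma betaFn_add_one_natCast_add_one (a : ℝ) (k : ℕ) :
    betaFn (a + 1) (k + 1) = ∫ u in Ioo (0 : ℝ) 1, u ^ a * (1 - u) ^ k := by
  simp only [betaFn, add_sub_cancel_right, Real.rpow_natCast]

lemma setIntegral_pow_mul_power_density (θ m : ℝ) (k : ℕ) :
    ∫ u in Ioo (0 : ℝ) 1, (1 - u) ^ k * ((u ^ (1 / θ)) ^ m * (θ * (u ^ (1 / θ)) ^ (θ - 1)))
      = θ * betaFn ((m + θ - 1) / θ + 1) (k + 1) := by
  rw [betaFn_add_one_natCast_add_one, ← integral_const_mul]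
  refine setIntegral_congr_fun measurableSet_Ioo fun u hu => ?_
  rw [rpow_one_div_rpow_mul_rpow_sub_one hu.1]
  ring

theorem gwj_minRSSU_power_general (θ m : ℝ) (n : ℕ) :
    -((n.factorial : ℝ) ^ 2 / 2) * ∏ i ∈ Finset.Icc 1 n,
        ∫ u in Set.Ioo (0:ℝ) 1,
          (1 - u) ^ (2 * i - 2) * ((u ^ (1/θ)) ^ m * (θ * (u ^ (1/θ)) ^ (θ - 1)))
      = -((n.factorial : ℝ) ^ 2 * θ ^ n / 2) * ∏ i ∈ Finset.Icc 1 n,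
        betaFn ((m + θ - 1) / θ + 1) (2 * (i:ℝ) - 1) := by
  have factor : ∀ i ∈ Finset.Icc 1 n,
      ∫ u in Ioo (0 : ℝ) 1,
          (1 - u) ^ (2 * i - 2) * ((u ^ (1 / θ)) ^ m * (θ * (u ^ (1 / θ)) ^ (θ - 1)))
        = θ * betaFn ((m + θ - 1) / θ + 1) (2 * (i : ℝ) - 1) := by
    intro i hi
    have two_le : 2 ≤ 2 * i := by have := (Finset.mem_Icc.mp hi).1; omega
    rw [setIntegral_pow_mul_power_density, Nat.cast_sub two_le]
    push_cast
    ring_nf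
  rw [Finset.prod_congr rfl factor, Finset.prod_mul_distrib, Finset.prod_const, Nat.card_Icc,
    Nat.add_sub_cancel]
  ring

/-- GWJ of minRSSU for the power distribution F(y)=y^θ on (0,1), w(y)=y^m:
the value is -((n!)² θ^n / 2) ∏_{i=1}^n B((m+θ-1)/θ + 1, 2i-1).
Here F⁻¹(u) = u^{1/θ} and f(y) = θ y^{θ-1}. -/
theorem gwj_minRSSU_power (θ m : ℝ) (hθ : 0 < θ) (hm : 0 < m) (n : ℕ) :
    -((n.factorial : ℝ) ^ 2 / 2) * ∏ i ∈ Finset.Icc 1 n,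
        ∫ u in Set.Ioo (0:ℝ) 1,
          (1 - u) ^ (2 * i - 2) * ((u ^ (1/θ)) ^ m * (θ * (u ^ (1/θ)) ^ (θ - 1)))
      = -((n.factorial : ℝ) ^ 2 * θ ^ n / 2) * ∏ i ∈ Finset.Icc 1 n,
        betaFn ((m + θ - 1) / θ + 1) (2 * (i:ℝ) - 1) :=
  gwj_minRSSU_power_general θ m n
end

section
/- For the exponential distribution with rate λ > 0 and weight w(x) = x^m, m > 0, the general weighted extropy of minRSSU of size n equals -(1/2) (1/λ^{m-1})^n (Γ(m+1)/2^{m+1})^n (1/n!)^{m-1}. -/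
open MeasureTheory Real Set

/-
With u = 1 - e^{-t}, i.e. t = -log(1 - u) = λ F⁻¹(u), each factor of the product becomes a Gamma
integral: ∫₀¹ (1-u)^{2i-2} (F⁻¹ u)^m f(F⁻¹ u) du = λ^{1-m} ∫₀^∞ t^m e^{-2it} dt
= λ^{1-m} Γ(m+1) / (2i)^{m+1}. Since ∏_{i=1}^n 2i = 2^n n!, the product is
λ^{(1-m)n} Γ(m+1)^n / (2^{m+1})^n / (n!)^{m+1}, and the prefactor (n!)² turns (n!)^{-(m+1)}
into (1/n!)^{m-1}.
-/

lemma image_one_sub_exp_neg_Ioi : (fun t : ℝ => 1 - exp (-t)) '' Ioi 0 = Ioo 0 1 := by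
  ext u
  constructor
  · rintro ⟨t, ht, rfl⟩
    have hexp_lt : exp (-t) < 1 := exp_lt_one_iff.mpr (neg_neg_of_pos ht)
    exact ⟨sub_pos.mpr hexp_lt, sub_lt_self 1 (exp_pos _)⟩
  · rintro ⟨hu0, hu1⟩
    refine ⟨-log (1 - u), neg_pos.mpr (log_neg (by linarith) (by linarith)), ?_⟩
    simp only [neg_neg, exp_log (sub_pos.mpr hu1), sub_sub_cancel]

lemma integral_Ioo_zero_one_eq_integral_Ioi_exp (g : ℝ → ℝ) :
    ∫ u in Ioo 0 1, g u = ∫ t in Ioi 0, exp (-t) * g (1 - exp (-t)) := by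
  have hderiv : ∀ t ∈ Ioi (0 : ℝ),
      HasDerivWithinAt (fun t : ℝ => 1 - exp (-t)) (exp (-t)) (Ioi 0) t := fun t _ => by
    simpa using (((hasDerivAt_exp (-t)).comp t (hasDerivAt_neg t)).const_sub 1).hasDerivWithinAt
  have hinj : InjOn (fun t : ℝ => 1 - exp (-t)) (Ioi 0) := fun a _ b _ h => by
    simpa only [sub_right_inj, exp_eq_exp, neg_inj] using h
  rw [← image_one_sub_exp_neg_Ioi,
    integral_image_eq_integral_abs_deriv_smul measurableSet_Ioi hderiv hinj]
  refine setIntegral_congr_fun measurableSet_Ioi fun t _ => ?_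
  simp only [abs_of_pos (exp_pos _), smul_eq_mul]

lemma integral_one_sub_pow_mul_exponential_quantile_rpow {lam m : ℝ} (hlam : 0 < lam)
    (hm : -1 < m) (k : ℕ) :
    ∫ u in Ioo 0 1, (1 - u) ^ k * ((-log (1 - u) / lam) ^ m * (lam * (1 - u)))
      = lam ^ (1 - m) * Gamma (m + 1) / ((k : ℝ) + 2) ^ (m + 1) := by
  have hintegrand : ∀ t ∈ Ioi (0 : ℝ),
      exp (-t) * ((1 - (1 - exp (-t))) ^ k *
        ((-log (1 - (1 - exp (-t))) / lam) ^ m * (lam * (1 - (1 - exp (-t))))))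
      = lam ^ (1 - m) * (t ^ (m + 1 - 1) * exp (-(((k : ℝ) + 2) * t))) := fun t ht => by
    have hexp : exp (-t) * exp (-t) ^ k * exp (-t) = exp (-(((k : ℝ) + 2) * t)) := by
      rw [← exp_nat_mul, ← exp_add, ← exp_add]; ring_nf
    simp only [sub_sub_cancel, log_exp, neg_neg, add_sub_cancel_right]
    rw [div_rpow (le_of_lt ht) hlam.le, rpow_sub hlam, rpow_one, ← hexp]
    field_simp
  rw [integral_Ioo_zero_one_eq_integral_Ioi_exp, setIntegral_congr_fun measurableSet_Ioi hintegrand,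
    integral_const_mul, integral_rpow_mul_exp_neg_mul_Ioi (by linarith) (by positivity),
    div_rpow zero_le_one (by positivity), one_rpow]
  ring

lemma prod_Icc_two_mul (n : ℕ) : ∏ i ∈ Finset.Icc 1 n, (2 * (i : ℝ)) = 2 ^ n * n.factorial := by
  rw [Finset.prod_mul_distrib, Finset.prod_const, Nat.card_Icc, Nat.add_sub_cancel,
    ← Finset.Ico_add_one_right_eq_Icc, ← Nat.cast_prod, Finset.prod_Ico_id_eq_factorial]

lemma neg_sq_div_two_mul_div_two_pow_mul_rpow {L F : ℝ} (hL : 0 < L) (hF : 0 < F) (m G : ℝ)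
    (n : ℕ) :
    -(F ^ 2 / 2) * ((L ^ (1 - m) * G) ^ n / (2 ^ n * F) ^ (m + 1))
      = -(1 / 2) * (1 / L ^ (m - 1)) ^ n * (G / 2 ^ (m + 1)) ^ n * (1 / F) ^ (m - 1) := by
  have hL' : 1 / L ^ (m - 1) = L ^ (1 - m) := by rw [one_div, ← rpow_neg hL.le, neg_sub]
  have hF' : (1 / F) ^ (m - 1) = F ^ 2 / F ^ (m + 1) := by
    rw [one_div, inv_rpow hF.le, ← rpow_neg hF.le, ← rpow_natCast, ← rpow_sub hF]
    ring_nf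
  rw [hL', hF', mul_rpow (by positivity) hF.le, ← rpow_natCast 2 n, ← rpow_mul zero_le_two,
    mul_comm (n : ℝ), rpow_mul_natCast zero_le_two, mul_pow, div_pow]
  field_simp

/-- GWJ of minRSSU for the exponential distribution with rate λ and weight
w(x) = x^m: the value is -(1/2)(1/λ^{m-1})^n (Γ(m+1)/2^{m+1})^n (1/n!)^{m-1}.
Here F⁻¹(u) = -log(1-u)/λ and f(F⁻¹(u)) = λ(1-u). -/
theorem gwj_minRSSU_exponential (lam m : ℝ) (hlam : 0 < lam) (hm : 0 < m) (n : ℕ) :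
    -((n.factorial : ℝ) ^ 2 / 2) * ∏ i ∈ Finset.Icc 1 n,
        ∫ u in Set.Ioo (0:ℝ) 1,
          (1 - u) ^ (2 * i - 2) * ((-Real.log (1 - u) / lam) ^ m * (lam * (1 - u)))
      = -(1/2 : ℝ) * (1 / lam ^ (m - 1)) ^ n *
          (Real.Gamma (m + 1) / (2:ℝ) ^ (m + 1)) ^ n *
          (1 / (n.factorial : ℝ)) ^ (m - 1) := by
  have hfactor : ∀ i ∈ Finset.Icc 1 n,
      ∫ u in Ioo (0 : ℝ) 1, (1 - u) ^ (2 * i - 2) * ((-log (1 - u) / lam) ^ m * (lam * (1 - u)))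
        = lam ^ (1 - m) * Gamma (m + 1) / (2 * (i : ℝ)) ^ (m + 1) := fun i hi => by
    have hcast : ((2 * i - 2 : ℕ) : ℝ) + 2 = 2 * i := by
      rw [Nat.cast_sub (by linarith [(Finset.mem_Icc.mp hi).1])]; push_cast; ring
    rw [integral_one_sub_pow_mul_exponential_quantile_rpow hlam (by linarith), hcast]
  rw [Finset.prod_congr rfl hfactor, Finset.prod_div_distrib, Finset.prod_const, Nat.card_Icc,
    Nat.add_sub_cancel, finsetProd_rpow _ _ (fun i _ => by positivity), prod_Icc_two_mul]
  exact neg_sq_div_two_mul_div_two_pow_mul_rpow hlam (by positivity) m _ n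
end

section
/- For the uniform distribution on (0,1) with weight w(x) = x^m, m > 0, the general weighted extropy of minRSSU of size n equals -((n!)²/2) ∏_{i=1}^n B(m+1, 2i-1), and that of maxRSSU equals -((n!)²/2) ∏_{i=1}^n 1/(m + 2i - 1). -/
open MeasureTheory

theorem integral_Ioo_one_sub_pow_mul_rpow_eq_betaFn (k : ℕ) (m : ℝ) :
    ∫ u in Set.Ioo (0:ℝ) 1, (1 - u) ^ k * u ^ m = betaFn (m + 1) (k + 1) := by
  unfold betaFn
  refine setIntegral_congr_fun measurableSet_Ioo fun u _ => ?_
  simp only [add_sub_cancel_right, Real.rpow_natCast]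
  ring

theorem integral_Ioo_pow_mul_rpow (k : ℕ) {m : ℝ} (hm : -1 < m + k) :
    ∫ u in Set.Ioo (0:ℝ) 1, u ^ k * u ^ m = 1 / (m + k + 1) := by
  have hpow : Set.EqOn (fun u : ℝ => u ^ k * u ^ m) (fun u => u ^ (m + k)) (Set.Ioo 0 1) :=
    fun u hu => by
      simp only [← Real.rpow_natCast, ← Real.rpow_add hu.1, add_comm]
  rw [setIntegral_congr_fun measurableSet_Ioo hpow, ← integral_Ioc_eq_integral_Ioo,
    ← intervalIntegral.integral_of_le zero_le_one, integral_rpow (Or.inl hm),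
    Real.one_rpow, Real.zero_rpow (by linarith)]
  ring

theorem Nat.cast_two_mul_sub_two {i : ℕ} (hi : 1 ≤ i) :
    ((2 * i - 2 : ℕ) : ℝ) = 2 * i - 2 := by
  rw [Nat.cast_sub (by omega)]
  push_cast
  ring

/-- GWJ of minRSSU and maxRSSU for the uniform distribution on (0,1) with
weight w(x)=x^m: here Λ^w(u) = w(F⁻¹(u)) f(F⁻¹(u)) = u^m, and
J^w(minRSSU) = -((n!)²/2)∏ B(m+1, 2i-1), J^w(maxRSSU) = -((n!)²/2)∏ 1/(m+2i-1). -/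
theorem gwj_uniform (m : ℝ) (hm : 0 < m) (n : ℕ) :
    (-((n.factorial : ℝ) ^ 2 / 2) * ∏ i ∈ Finset.Icc 1 n,
        ∫ u in Set.Ioo (0:ℝ) 1, (1 - u) ^ (2 * i - 2) * u ^ m
      = -((n.factorial : ℝ) ^ 2 / 2) * ∏ i ∈ Finset.Icc 1 n,
          betaFn (m + 1) (2 * (i:ℝ) - 1))
    ∧
    (-((n.factorial : ℝ) ^ 2 / 2) * ∏ i ∈ Finset.Icc 1 n,
        ∫ u in Set.Ioo (0:ℝ) 1, u ^ (2 * i - 2) * u ^ m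
      = -((n.factorial : ℝ) ^ 2 / 2) * ∏ i ∈ Finset.Icc 1 n,
          1 / (m + 2 * (i:ℝ) - 1)) := by
  refine ⟨congrArg _ (Finset.prod_congr rfl fun i hi => ?_),
    congrArg _ (Finset.prod_congr rfl fun i hi => ?_)⟩ <;>
    have hcast := Nat.cast_two_mul_sub_two (Finset.mem_Icc.mp hi).1
  · rw [integral_Ioo_one_sub_pow_mul_rpow_eq_betaFn, hcast]
    ring_nf
  · have hexp : -1 < m + ((2 * i - 2 : ℕ) : ℝ) := by
      rw [hcast]
      linarith [(Finset.mem_Icc.mp hi).1]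
    rw [integral_Ioo_pow_mul_rpow _ hexp, hcast]
    ring_nf
end

section
/- Let φ be an increasing differentiable function with φ(0) = 0 and w(φ(x))/φ'(x) ≤ w(x) for all x ≥ 0. If Z = φ(X), then J^w(X_minRSSU^(n)) ≤ J^w(Z_minRSSU^(n)) and J^w(X_maxRSSU^(n)) ≤ J^w(Z_maxRSSU^(n)). -/
/-!
On `(0, 1)` the weighted density of `Z = φ(X)` in the quantile scale is
`w(φ(F⁻¹ u)) f(F⁻¹ u) / φ'(F⁻¹ u)`, which the hypothesis on `w` and `φ` bounds pointwise by the
weighted density `w(F⁻¹ u) f(F⁻¹ u)` of `X`. Integrating against the weights `(1 - u)^(2i-2)` or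
`u^(2i-2)`, which lie in `[0, 1]`, preserves this, so every factor of the product for `Z` is a
nonnegative number below the corresponding factor for `X`. The products compare the same way,
and the negative constant `-(n!)²/2` reverses the inequality.
-/

open MeasureTheory

section WeightedIntegrals

variable {α : Type*} [MeasurableSpace α] {μ : Measure α} {s : Set α}

lemma setIntegral_mul_mono_of_mem_Icc {g Λ Λ' : α → ℝ} (hs : MeasurableSet s)
    (hg : AEStronglyMeasurable g (μ.restrict s)) (hg01 : ∀ u ∈ s, g u ∈ Set.Icc 0 1)
    (hΛ : AEStronglyMeasurable Λ (μ.restrict s)) (hΛ0 : ∀ u ∈ s, 0 ≤ Λ u)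
    (hΛΛ' : ∀ u ∈ s, Λ u ≤ Λ' u) (hΛ' : IntegrableOn Λ' s μ) :
    ∫ u in s, g u * Λ u ∂μ ≤ ∫ u in s, g u * Λ' u ∂μ := by
  have hg_bound : ∀ᵐ u ∂μ.restrict s, ‖g u‖ ≤ 1 := by
    filter_upwards [ae_restrict_mem hs] with u hu
    rw [Real.norm_of_nonneg (hg01 u hu).1]
    exact (hg01 u hu).2
  have hΛ_int : IntegrableOn Λ s μ := by
    refine hΛ'.mono' hΛ ?_
    filter_upwards [ae_restrict_mem hs] with u hu
    rw [Real.norm_of_nonneg (hΛ0 u hu)]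
    exact hΛΛ' u hu
  exact setIntegral_mono_on (hΛ_int.bdd_mul hg hg_bound) (hΛ'.bdd_mul hg hg_bound) hs
    fun u hu => mul_le_mul_of_nonneg_left (hΛΛ' u hu) (hg01 u hu).1

lemma prod_setIntegral_mul_mono_of_mem_Icc {ι : Type*} (t : Finset ι) {g : ι → α → ℝ}
    {Λ Λ' : α → ℝ} (hs : MeasurableSet s) (hg : ∀ i, AEStronglyMeasurable (g i) (μ.restrict s))
    (hg01 : ∀ i, ∀ u ∈ s, g i u ∈ Set.Icc 0 1)
    (hΛ : AEStronglyMeasurable Λ (μ.restrict s)) (hΛ0 : ∀ u ∈ s, 0 ≤ Λ u)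
    (hΛΛ' : ∀ u ∈ s, Λ u ≤ Λ' u) (hΛ' : IntegrableOn Λ' s μ) :
    ∏ i ∈ t, ∫ u in s, g i u * Λ u ∂μ ≤ ∏ i ∈ t, ∫ u in s, g i u * Λ' u ∂μ :=
  Finset.prod_le_prod
    (fun i _ => setIntegral_nonneg hs fun u hu => mul_nonneg (hg01 i u hu).1 (hΛ0 u hu))
    (fun i _ => setIntegral_mul_mono_of_mem_Icc hs (hg i) (hg01 i) hΛ hΛ0 hΛΛ' hΛ')

end WeightedIntegrals

lemma pow_mem_Icc_of_mem_Ioo {u : ℝ} (hu : u ∈ Set.Ioo 0 1) (k : ℕ) :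
    u ^ k ∈ Set.Icc 0 1 :=
  ⟨pow_nonneg hu.1.le k, pow_le_one₀ hu.1.le hu.2.le⟩

lemma one_sub_pow_mem_Icc_of_mem_Ioo {u : ℝ} (hu : u ∈ Set.Ioo 0 1) (k : ℕ) :
    (1 - u) ^ k ∈ Set.Icc 0 1 :=
  pow_mem_Icc_of_mem_Ioo ⟨sub_pos.2 hu.2, sub_lt_self 1 hu.1⟩ k

theorem gwj_increasing_transform_general
    (n : ℕ) (f Finv w phi dphi : ℝ → ℝ)
    (hf0 : ∀ x, 0 ≤ f x) (hw : ∀ x, 0 ≤ w x)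
    (hdpos : ∀ x, 0 < dphi x)
    (hwphi : ∀ x, 0 ≤ x → w (phi x) / dphi x ≤ w x)
    (hFinv : ∀ u ∈ Set.Ioo (0:ℝ) 1, 0 ≤ Finv u)
    (hmeasZ : Measurable fun u => w (phi (Finv u)) * (f (Finv u) / dphi (Finv u)))
    (hintX : IntegrableOn (fun u => w (Finv u) * f (Finv u)) (Set.Ioo (0:ℝ) 1)) :
    (-((n.factorial : ℝ) ^ 2 / 2) * ∏ i ∈ Finset.Icc 1 n,
        ∫ u in Set.Ioo (0:ℝ) 1, (1 - u) ^ (2 * i - 2) * (w (Finv u) * f (Finv u))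
      ≤ -((n.factorial : ℝ) ^ 2 / 2) * ∏ i ∈ Finset.Icc 1 n,
        ∫ u in Set.Ioo (0:ℝ) 1,
          (1 - u) ^ (2 * i - 2) * (w (phi (Finv u)) * (f (Finv u) / dphi (Finv u))))
    ∧
    (-((n.factorial : ℝ) ^ 2 / 2) * ∏ i ∈ Finset.Icc 1 n,
        ∫ u in Set.Ioo (0:ℝ) 1, u ^ (2 * i - 2) * (w (Finv u) * f (Finv u))
      ≤ -((n.factorial : ℝ) ^ 2 / 2) * ∏ i ∈ Finset.Icc 1 n,
        ∫ u in Set.Ioo (0:ℝ) 1,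
          u ^ (2 * i - 2) * (w (phi (Finv u)) * (f (Finv u) / dphi (Finv u)))) := by
  have hc : -((n.factorial : ℝ) ^ 2 / 2) ≤ 0 := by
    have : (0 : ℝ) ≤ (n.factorial : ℝ) ^ 2 / 2 := by positivity
    linarith
  have hZ0 : ∀ u ∈ Set.Ioo (0:ℝ) 1, 0 ≤ w (phi (Finv u)) * (f (Finv u) / dphi (Finv u)) :=
    fun u _ => mul_nonneg (hw _) (div_nonneg (hf0 _) (hdpos _).le)
  have hZX : ∀ u ∈ Set.Ioo (0:ℝ) 1,
      w (phi (Finv u)) * (f (Finv u) / dphi (Finv u)) ≤ w (Finv u) * f (Finv u) := by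
    intro u hu
    calc w (phi (Finv u)) * (f (Finv u) / dphi (Finv u))
        = (w (phi (Finv u)) / dphi (Finv u)) * f (Finv u) := by ring
      _ ≤ w (Finv u) * f (Finv u) :=
          mul_le_mul_of_nonneg_right (hwphi _ (hFinv u hu)) (hf0 _)
  constructor
  · exact mul_le_mul_of_nonpos_left (prod_setIntegral_mul_mono_of_mem_Icc _ measurableSet_Ioo
      (fun _ => by fun_prop) (fun _ _ hu => one_sub_pow_mem_Icc_of_mem_Ioo hu _)
      hmeasZ.aestronglyMeasurable hZ0 hZX hintX) hc
  · exact mul_le_mul_of_nonpos_left (prod_setIntegral_mul_mono_of_mem_Icc _ measurableSet_Ioo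
      (fun _ => by fun_prop) (fun _ _ hu => pow_mem_Icc_of_mem_Ioo hu _)
      hmeasZ.aestronglyMeasurable hZ0 hZX hintX) hc

/-- If φ is increasing with φ(0)=0 and w(φ(x))/φ'(x) ≤ w(x) for x ≥ 0, and
Z = φ(X) (so Λ_Z(u) = w(φ(F⁻¹(u))) f(F⁻¹(u))/φ'(F⁻¹(u))), then
J^w(X_minRSSU^(n)) ≤ J^w(Z_minRSSU^(n)) and J^w(X_maxRSSU^(n)) ≤ J^w(Z_maxRSSU^(n)). -/
theorem gwj_increasing_transform
    (n : ℕ) (f Finv w phi dphi : ℝ → ℝ)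
    (hf0 : ∀ x, 0 ≤ f x) (hw : ∀ x, 0 ≤ w x)
    (hderiv : ∀ x, HasDerivAt phi (dphi x) x)
    (hphimono : StrictMono phi) (hdpos : ∀ x, 0 < dphi x) (hphi0 : phi 0 = 0)
    (hwphi : ∀ x, 0 ≤ x → w (phi x) / dphi x ≤ w x)
    (hFinv : ∀ u ∈ Set.Ioo (0:ℝ) 1, 0 ≤ Finv u)
    (hmeasX : Measurable fun u => w (Finv u) * f (Finv u))
    (hmeasZ : Measurable fun u => w (phi (Finv u)) * (f (Finv u) / dphi (Finv u)))
    (hintX : IntegrableOn (fun u => w (Finv u) * f (Finv u)) (Set.Ioo (0:ℝ) 1)) :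
    (-((n.factorial : ℝ) ^ 2 / 2) * ∏ i ∈ Finset.Icc 1 n,
        ∫ u in Set.Ioo (0:ℝ) 1, (1 - u) ^ (2 * i - 2) * (w (Finv u) * f (Finv u))
      ≤ -((n.factorial : ℝ) ^ 2 / 2) * ∏ i ∈ Finset.Icc 1 n,
        ∫ u in Set.Ioo (0:ℝ) 1,
          (1 - u) ^ (2 * i - 2) * (w (phi (Finv u)) * (f (Finv u) / dphi (Finv u))))
    ∧
    (-((n.factorial : ℝ) ^ 2 / 2) * ∏ i ∈ Finset.Icc 1 n,
        ∫ u in Set.Ioo (0:ℝ) 1, u ^ (2 * i - 2) * (w (Finv u) * f (Finv u))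
      ≤ -((n.factorial : ℝ) ^ 2 / 2) * ∏ i ∈ Finset.Icc 1 n,
        ∫ u in Set.Ioo (0:ℝ) 1,
          u ^ (2 * i - 2) * (w (phi (Finv u)) * (f (Finv u) / dphi (Finv u)))) :=
  gwj_increasing_transform_general n f Finv w phi dphi hf0 hw hdpos hwphi hFinv hmeasZ hintX
end

section
/- If w is increasing and X ≤_disp Y, then J^w(X_minRSSU^(n)) ≤ J^w(Y_minRSSU^(n)) and J^w(X_maxRSSU^(n)) ≤ J^w(Y_maxRSSU^(n)). -/
/-!
Since `w` is increasing and `Ginv ≤ Finv`, the dispersive order gives the pointwise bound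
`w (Ginv u) * g (Ginv u) ≤ w (Finv u) * f (Finv u)` on `(0, 1)`, between nonnegative functions.
Each factor of the two products integrates this bound against a weight with values in `[0, 1]`,
so every factor for `X` dominates the nonnegative factor for `Y`; hence so do the products,
and the negative constant `-(n!)² / 2` reverses the inequality.
-/

open MeasureTheory

section WeightedIntegral

variable {α ι : Type*} [MeasurableSpace α] {μ : Measure α} {s : Set α} {φ ψ : α → ℝ}

theorem setIntegral_weight_mul_mono (hs : MeasurableSet s) {p : α → ℝ}
    (hp : AEStronglyMeasurable p (μ.restrict s)) (hp01 : ∀ x ∈ s, p x ∈ Set.Icc (0 : ℝ) 1)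
    (hψ : ∀ x ∈ s, 0 ≤ ψ x) (hψφ : ∀ x ∈ s, ψ x ≤ φ x) (hφ : IntegrableOn φ s μ) :
    0 ≤ ∫ x in s, p x * ψ x ∂μ ∧ ∫ x in s, p x * ψ x ∂μ ≤ ∫ x in s, p x * φ x ∂μ := by
  have hpψ : ∀ x ∈ s, 0 ≤ p x * ψ x := fun x hx => mul_nonneg (hp01 x hx).1 (hψ x hx)
  have hpφ : IntegrableOn (fun x => p x * φ x) s μ := by
    refine hφ.bdd_mul hp (c := 1) ?_
    filter_upwards [ae_restrict_mem hs] with x hx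
    rw [Real.norm_eq_abs, abs_of_nonneg (hp01 x hx).1]
    exact (hp01 x hx).2
  exact ⟨setIntegral_nonneg hs hpψ, setIntegral_mono_of_nonneg hpψ
    (fun x hx => mul_le_mul_of_nonneg_left (hψφ x hx) (hp01 x hx).1) hpφ⟩

theorem prod_setIntegral_weight_mul_mono (hs : MeasurableSet s) (t : Finset ι)
    {p : ι → α → ℝ} (hp : ∀ i ∈ t, AEStronglyMeasurable (p i) (μ.restrict s))
    (hp01 : ∀ i ∈ t, ∀ x ∈ s, p i x ∈ Set.Icc (0 : ℝ) 1)
    (hψ : ∀ x ∈ s, 0 ≤ ψ x) (hψφ : ∀ x ∈ s, ψ x ≤ φ x) (hφ : IntegrableOn φ s μ) :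
    ∏ i ∈ t, ∫ x in s, p i x * ψ x ∂μ ≤ ∏ i ∈ t, ∫ x in s, p i x * φ x ∂μ :=
  Finset.prod_le_prod
    (fun i hi => (setIntegral_weight_mul_mono hs (hp i hi) (hp01 i hi) hψ hψφ hφ).1)
    (fun i hi => (setIntegral_weight_mul_mono hs (hp i hi) (hp01 i hi) hψ hψφ hφ).2)

end WeightedIntegral

theorem pow_mem_Icc_zero_one {u : ℝ} (hu : u ∈ Set.Icc (0 : ℝ) 1) (k : ℕ) :
    u ^ k ∈ Set.Icc (0 : ℝ) 1 :=
  ⟨pow_nonneg hu.1 k, pow_le_one₀ hu.1 hu.2⟩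

theorem gwj_disp_compare_general
    (n : ℕ) (f g Finv Ginv w : ℝ → ℝ)
    (hg0 : ∀ x, 0 ≤ g x)
    (hwmono : Monotone w) (hw0 : ∀ x, 0 ≤ w x)
    (hdisp : ∀ u ∈ Set.Ioo (0:ℝ) 1, g (Ginv u) ≤ f (Finv u))
    (hst : ∀ u ∈ Set.Ioo (0:ℝ) 1, Ginv u ≤ Finv u)
    (hintX : IntegrableOn (fun u => w (Finv u) * f (Finv u)) (Set.Ioo (0:ℝ) 1)) :
    (-((n.factorial : ℝ) ^ 2 / 2) * ∏ i ∈ Finset.Icc 1 n,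
        ∫ u in Set.Ioo (0:ℝ) 1, (1 - u) ^ (2 * i - 2) * (w (Finv u) * f (Finv u))
      ≤ -((n.factorial : ℝ) ^ 2 / 2) * ∏ i ∈ Finset.Icc 1 n,
        ∫ u in Set.Ioo (0:ℝ) 1, (1 - u) ^ (2 * i - 2) * (w (Ginv u) * g (Ginv u)))
    ∧
    (-((n.factorial : ℝ) ^ 2 / 2) * ∏ i ∈ Finset.Icc 1 n,
        ∫ u in Set.Ioo (0:ℝ) 1, u ^ (2 * i - 2) * (w (Finv u) * f (Finv u))
      ≤ -((n.factorial : ℝ) ^ 2 / 2) * ∏ i ∈ Finset.Icc 1 n,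
        ∫ u in Set.Ioo (0:ℝ) 1, u ^ (2 * i - 2) * (w (Ginv u) * g (Ginv u))) := by
  have hY : ∀ u ∈ Set.Ioo (0:ℝ) 1, 0 ≤ w (Ginv u) * g (Ginv u) :=
    fun u _ => mul_nonneg (hw0 _) (hg0 _)
  have hYX : ∀ u ∈ Set.Ioo (0:ℝ) 1, w (Ginv u) * g (Ginv u) ≤ w (Finv u) * f (Finv u) :=
    fun u hu => mul_le_mul (hwmono (hst u hu)) (hdisp u hu) (hg0 _) (hw0 _)
  have hc : -((n.factorial : ℝ) ^ 2 / 2) ≤ 0 := neg_nonpos.mpr (by positivity)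
  constructor
  · refine mul_le_mul_of_nonpos_left
      (prod_setIntegral_weight_mul_mono measurableSet_Ioo _ (fun i _ => ?_) (fun i _ u hu => ?_)
        hY hYX hintX) hc
    · fun_prop
    · exact pow_mem_Icc_zero_one ⟨by linarith [hu.2], by linarith [hu.1]⟩ _
  · refine mul_le_mul_of_nonpos_left
      (prod_setIntegral_weight_mul_mono measurableSet_Ioo _ (fun i _ => ?_) (fun i _ u hu => ?_)
        hY hYX hintX) hc
    · fun_prop
    · exact pow_mem_Icc_zero_one (Set.Ioo_subset_Icc_self hu) _

/-- If w is increasing and X ≤_disp Y (so f(F⁻¹(u)) ≥ g(G⁻¹(u)) and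
F⁻¹(u) ≥ G⁻¹(u) for u ∈ (0,1)), then J^w(X_minRSSU^(n)) ≤ J^w(Y_minRSSU^(n))
and J^w(X_maxRSSU^(n)) ≤ J^w(Y_maxRSSU^(n)). -/
theorem gwj_disp_compare
    (n : ℕ) (f g Finv Ginv w : ℝ → ℝ)
    (hf0 : ∀ x, 0 ≤ f x) (hg0 : ∀ x, 0 ≤ g x)
    (hwmono : Monotone w) (hw0 : ∀ x, 0 ≤ w x)
    (hdisp : ∀ u ∈ Set.Ioo (0:ℝ) 1, g (Ginv u) ≤ f (Finv u))
    (hst : ∀ u ∈ Set.Ioo (0:ℝ) 1, Ginv u ≤ Finv u)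
    (hmeasX : Measurable fun u => w (Finv u) * f (Finv u))
    (hmeasY : Measurable fun u => w (Ginv u) * g (Ginv u))
    (hintX : IntegrableOn (fun u => w (Finv u) * f (Finv u)) (Set.Ioo (0:ℝ) 1)) :
    (-((n.factorial : ℝ) ^ 2 / 2) * ∏ i ∈ Finset.Icc 1 n,
        ∫ u in Set.Ioo (0:ℝ) 1, (1 - u) ^ (2 * i - 2) * (w (Finv u) * f (Finv u))
      ≤ -((n.factorial : ℝ) ^ 2 / 2) * ∏ i ∈ Finset.Icc 1 n,
        ∫ u in Set.Ioo (0:ℝ) 1, (1 - u) ^ (2 * i - 2) * (w (Ginv u) * g (Ginv u)))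
    ∧
    (-((n.factorial : ℝ) ^ 2 / 2) * ∏ i ∈ Finset.Icc 1 n,
        ∫ u in Set.Ioo (0:ℝ) 1, u ^ (2 * i - 2) * (w (Finv u) * f (Finv u))
      ≤ -((n.factorial : ℝ) ^ 2 / 2) * ∏ i ∈ Finset.Icc 1 n,
        ∫ u in Set.Ioo (0:ℝ) 1, u ^ (2 * i - 2) * (w (Ginv u) * g (Ginv u))) :=
  gwj_disp_compare_general n f g Finv Ginv w hg0 hwmono hw0 hdisp hst hintX
end

section
/- If w(F⁻¹(u)) f(F⁻¹(u)) ≥ 1 for all u ∈ (0,1), then J^w(X_minRSSU^(n)) is decreasing in n ≥ 1, and likewise J^w(X_maxRSSU^(n)) is decreasing in n ≥ 1. -/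
/-!
Write `Λ u = w (F⁻¹ u) f (F⁻¹ u)` and `a i = i² ∫₀¹ g_i Λ` with `g_i u = u ^ (2i-2)` or
`(1-u) ^ (2i-2)`. Since `0 ≤ g_i ≤ 1` and `Λ ≥ 1`, we get `a i ≥ i² ∫₀¹ g_i = i² / (2i-1) ≥ 1`,
so the products `∏_{i ≤ n} a i` increase with `n`.
-/

open MeasureTheory Set Finset

theorem Finset.monotone_prod_Icc_one {a : ℕ → ℝ} (ha : ∀ i, 1 ≤ i → 1 ≤ a i) :
    Monotone fun n => ∏ i ∈ Icc 1 n, a i := fun _ _ hmn =>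
  prod_le_prod_of_subset_of_one_le (Icc_subset_Icc_right hmn)
    (fun i hi => zero_le_one.trans (ha i (mem_Icc.mp hi).1))
    (fun i hi _ => ha i (mem_Icc.mp hi).1)

section

variable {α : Type*} [MeasurableSpace α] {μ : Measure α} {s : Set α} {g Λ : α → ℝ}

theorem setIntegral_le_setIntegral_mul_of_one_le (hs : MeasurableSet s)
    (hΛ : IntegrableOn Λ s μ) (hΛ1 : ∀ u ∈ s, 1 ≤ Λ u)
    (hg : AEStronglyMeasurable g (μ.restrict s))
    (hg0 : ∀ u ∈ s, 0 ≤ g u) (hg1 : ∀ u ∈ s, g u ≤ 1) :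
    ∫ u in s, g u ∂μ ≤ ∫ u in s, g u * Λ u ∂μ := by
  have hgΛ : IntegrableOn (fun u => g u * Λ u) s μ := by
    refine Integrable.bdd_mul hΛ hg (c := 1) ?_
    filter_upwards [ae_restrict_mem hs] with u hu
    rw [Real.norm_of_nonneg (hg0 u hu)]
    exact hg1 u hu
  refine integral_mono_of_nonneg ?_ hgΛ ?_ <;>
    filter_upwards [ae_restrict_mem hs] with u hu
  · exact hg0 u hu
  · exact le_mul_of_one_le_right (hg0 u hu) (hΛ1 u hu)

end

theorem integral_Ioo_zero_one_pow (k : ℕ) : ∫ u in Ioo (0:ℝ) 1, u ^ k = 1 / (k + 1) := by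
  rw [← integral_Ioc_eq_integral_Ioo, ← intervalIntegral.integral_of_le zero_le_one]
  simp [integral_pow]

theorem integral_Ioo_zero_one_one_sub_pow (k : ℕ) :
    ∫ u in Ioo (0:ℝ) 1, (1 - u) ^ k = 1 / (k + 1) := by
  rw [← integral_Ioc_eq_integral_Ioo, ← intervalIntegral.integral_of_le zero_le_one,
    intervalIntegral.integral_comp_sub_left (fun x => x ^ k) 1]
  simp [integral_pow]

section

variable {Λ g : ℝ → ℝ}

theorem one_le_sq_mul_setIntegral_mul (hΛ : IntegrableOn Λ (Ioo 0 1))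
    (hΛ1 : ∀ u ∈ Ioo (0:ℝ) 1, 1 ≤ Λ u) (hg : Continuous g)
    (hg0 : ∀ u ∈ Ioo (0:ℝ) 1, 0 ≤ g u) (hg1 : ∀ u ∈ Ioo (0:ℝ) 1, g u ≤ 1)
    {i : ℕ} (hi : 1 ≤ i) (hgi : ∫ u in Ioo (0:ℝ) 1, g u = 1 / ((2 * i - 2 : ℕ) + 1)) :
    1 ≤ (i:ℝ) ^ 2 * ∫ u in Ioo (0:ℝ) 1, g u * Λ u := by
  have hden : ((2 * i - 2 : ℕ) : ℝ) + 1 = 2 * i - 1 := by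
    rw [Nat.cast_sub (by omega)]; push_cast; ring
  have hi' : (1:ℝ) ≤ i := by exact_mod_cast hi
  calc (1:ℝ) ≤ (i:ℝ) ^ 2 / (2 * i - 1) := by
        rw [one_le_div (by linarith)]; nlinarith
    _ = (i:ℝ) ^ 2 * ∫ u in Ioo (0:ℝ) 1, g u := by rw [hgi, hden, mul_one_div]
    _ ≤ (i:ℝ) ^ 2 * ∫ u in Ioo (0:ℝ) 1, g u * Λ u :=
        mul_le_mul_of_nonneg_left (setIntegral_le_setIntegral_mul_of_one_le measurableSet_Ioo
          hΛ hΛ1 hg.aestronglyMeasurable hg0 hg1) (by positivity)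

theorem one_le_sq_mul_setIntegral_pow_mul (hΛ : IntegrableOn Λ (Ioo 0 1))
    (hΛ1 : ∀ u ∈ Ioo (0:ℝ) 1, 1 ≤ Λ u) {i : ℕ} (hi : 1 ≤ i) :
    1 ≤ (i:ℝ) ^ 2 * ∫ u in Ioo (0:ℝ) 1, u ^ (2 * i - 2) * Λ u :=
  one_le_sq_mul_setIntegral_mul hΛ hΛ1 (continuous_pow _)
    (fun _ hu => pow_nonneg hu.1.le _) (fun _ hu => pow_le_one₀ hu.1.le hu.2.le) hi
    (integral_Ioo_zero_one_pow _)

theorem one_le_sq_mul_setIntegral_one_sub_pow_mul (hΛ : IntegrableOn Λ (Ioo 0 1))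
    (hΛ1 : ∀ u ∈ Ioo (0:ℝ) 1, 1 ≤ Λ u) {i : ℕ} (hi : 1 ≤ i) :
    1 ≤ (i:ℝ) ^ 2 * ∫ u in Ioo (0:ℝ) 1, (1 - u) ^ (2 * i - 2) * Λ u :=
  one_le_sq_mul_setIntegral_mul hΛ hΛ1 (by fun_prop)
    (fun _ hu => pow_nonneg (sub_nonneg.mpr hu.2.le) _)
    (fun _ hu => pow_le_one₀ (sub_nonneg.mpr hu.2.le) (by linarith [hu.1])) hi
    (integral_Ioo_zero_one_one_sub_pow _)

end

theorem gwj_monotone_in_n_general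
    (f Finv w : ℝ → ℝ)
    (hL : ∀ u ∈ Set.Ioo (0:ℝ) 1, 1 ≤ w (Finv u) * f (Finv u))
    (hint : IntegrableOn (fun u => w (Finv u) * f (Finv u)) (Set.Ioo (0:ℝ) 1)) :
    AntitoneOn (fun n : ℕ => -(1/2 : ℝ) * ∏ i ∈ Finset.Icc 1 n,
        ((i:ℝ) ^ 2 * ∫ u in Set.Ioo (0:ℝ) 1,
          (1 - u) ^ (2 * i - 2) * (w (Finv u) * f (Finv u)))) (Set.Ici 1)
    ∧
    AntitoneOn (fun n : ℕ => -(1/2 : ℝ) * ∏ i ∈ Finset.Icc 1 n,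
        ((i:ℝ) ^ 2 * ∫ u in Set.Ioo (0:ℝ) 1,
          u ^ (2 * i - 2) * (w (Finv u) * f (Finv u)))) (Set.Ici 1) := by
  have hc : -(1/2 : ℝ) ≤ 0 := by norm_num
  exact ⟨((monotone_prod_Icc_one fun _ hi =>
      one_le_sq_mul_setIntegral_one_sub_pow_mul hint hL hi).const_mul_of_nonpos hc).antitoneOn _,
    ((monotone_prod_Icc_one fun _ hi =>
      one_le_sq_mul_setIntegral_pow_mul hint hL hi).const_mul_of_nonpos hc).antitoneOn _⟩

/-- If Λ(u) = w(F⁻¹(u)) f(F⁻¹(u)) ≥ 1 on (0,1), then J^w(X_minRSSU^(n)) and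
J^w(X_maxRSSU^(n)) are decreasing in n ≥ 1, where
J^w(X_minRSSU^(n)) = -(1/2)∏_{i=1}^n i² ∫₀¹ (1-u)^{2i-2} Λ(u) du
(and with u^{2i-2} for maxRSSU). -/
theorem gwj_monotone_in_n
    (f Finv w : ℝ → ℝ)
    (hL : ∀ u ∈ Set.Ioo (0:ℝ) 1, 1 ≤ w (Finv u) * f (Finv u))
    (hmeas : Measurable fun u => w (Finv u) * f (Finv u))
    (hint : IntegrableOn (fun u => w (Finv u) * f (Finv u)) (Set.Ioo (0:ℝ) 1)) :
    AntitoneOn (fun n : ℕ => -(1/2 : ℝ) * ∏ i ∈ Finset.Icc 1 n,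
        ((i:ℝ) ^ 2 * ∫ u in Set.Ioo (0:ℝ) 1,
          (1 - u) ^ (2 * i - 2) * (w (Finv u) * f (Finv u)))) (Set.Ici 1)
    ∧
    AntitoneOn (fun n : ℕ => -(1/2 : ℝ) * ∏ i ∈ Finset.Icc 1 n,
        ((i:ℝ) ^ 2 * ∫ u in Set.Ioo (0:ℝ) 1,
          u ^ (2 * i - 2) * (w (Finv u) * f (Finv u)))) (Set.Ici 1) :=
  gwj_monotone_in_n_general f Finv w hL hint
end

section
/- J^w(X_minRSSU^(n)) ≥ (n!)² J^w(X_SRS^(n)) and J^w(X_maxRSSU^(n)) ≥ (n!)² J^w(X_SRS^(n)), where J^w(X_SRS^(n)) = -(1/2)(∫₀¹ w(F⁻¹(u)) f(F⁻¹(u)) du)^n. -/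
/-! Since `Λ ≥ 0` and the kernels `u ^ k`, `(1 - u) ^ k` take values in `[0, 1]` on `(0, 1)`,
every factor of the product lies in `[0, ∫ Λ]`; hence the product is at most `(∫ Λ) ^ n`, and
multiplying by the negative constant `-(n!)² / 2` reverses the inequality. -/

open MeasureTheory

section

variable {α : Type*} [MeasurableSpace α] {μ : Measure α}

theorem integral_mul_le_integral_of_le_one {g Λ : α → ℝ} (hΛ : Integrable Λ μ)
    (hΛ0 : 0 ≤ᵐ[μ] Λ) (hg : AEStronglyMeasurable g μ) (hg0 : 0 ≤ᵐ[μ] g)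
    (hg1 : ∀ᵐ x ∂μ, g x ≤ 1) :
    ∫ x, g x * Λ x ∂μ ≤ ∫ x, Λ x ∂μ := by
  have hgΛ : Integrable (fun x => g x * Λ x) μ := by
    refine hΛ.mono' (hg.mul hΛ.aestronglyMeasurable) ?_
    filter_upwards [hΛ0, hg0, hg1] with x hΛx hgx hgx1
    rw [Real.norm_eq_abs, abs_of_nonneg (mul_nonneg hgx hΛx)]
    exact mul_le_of_le_one_left hΛx hgx1
  refine integral_mono_ae hgΛ hΛ ?_
  filter_upwards [hΛ0, hg1] with x hΛx hgx1
  exact mul_le_of_le_one_left hΛx hgx1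

theorem prod_integral_mul_le_pow {ι : Type*} (t : Finset ι) {G : ι → α → ℝ} {Λ : α → ℝ}
    (hΛ : Integrable Λ μ) (hΛ0 : 0 ≤ᵐ[μ] Λ) (hG : ∀ i, AEStronglyMeasurable (G i) μ)
    (hG0 : ∀ i, 0 ≤ᵐ[μ] G i) (hG1 : ∀ i, ∀ᵐ x ∂μ, G i x ≤ 1) :
    ∏ i ∈ t, ∫ x, G i x * Λ x ∂μ ≤ (∫ x, Λ x ∂μ) ^ t.card := by
  rw [← Finset.prod_const]
  refine Finset.prod_le_prod (fun i _ => integral_nonneg_of_ae ?_)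
    (fun i _ => integral_mul_le_integral_of_le_one hΛ hΛ0 (hG i) (hG0 i) (hG1 i))
  filter_upwards [hΛ0, hG0 i] with x hΛx hGx
  exact mul_nonneg hGx hΛx

end

theorem prod_setIntegral_pow_mul_le_pow {ι : Type*} (t : Finset ι) (e : ι → ℕ)
    {s : Set ℝ} (hs : MeasurableSet s) {h Λ : ℝ → ℝ} (hΛ : IntegrableOn Λ s)
    (hΛ0 : ∀ u, 0 ≤ Λ u) (hh : Continuous h) (hh0 : ∀ u ∈ s, 0 ≤ h u)
    (hh1 : ∀ u ∈ s, h u ≤ 1) :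
    ∏ i ∈ t, ∫ u in s, h u ^ e i * Λ u ≤ (∫ u in s, Λ u) ^ t.card :=
  prod_integral_mul_le_pow t hΛ (ae_of_all _ hΛ0)
    (fun i => (hh.pow (e i)).aestronglyMeasurable)
    (fun _ => (ae_restrict_iff' hs).2 (ae_of_all _ fun u hu => pow_nonneg (hh0 u hu) _))
    (fun _ => (ae_restrict_iff' hs).2 (ae_of_all _ fun u hu => pow_le_one₀ (hh0 u hu) (hh1 u hu)))

theorem gwj_rssu_vs_srs_general
    (n : ℕ) (f Finv w : ℝ → ℝ)
    (hf0 : ∀ x, 0 ≤ f x) (hw0 : ∀ x, 0 ≤ w x)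
    (hint : IntegrableOn (fun u => w (Finv u) * f (Finv u)) (Set.Ioo (0:ℝ) 1)) :
    (-((n.factorial : ℝ) ^ 2 / 2) * ∏ i ∈ Finset.Icc 1 n,
        ∫ u in Set.Ioo (0:ℝ) 1, (1 - u) ^ (2 * i - 2) * (w (Finv u) * f (Finv u))
      ≥ (n.factorial : ℝ) ^ 2 *
        (-(1/2 : ℝ) * (∫ u in Set.Ioo (0:ℝ) 1, w (Finv u) * f (Finv u)) ^ n))
    ∧
    (-((n.factorial : ℝ) ^ 2 / 2) * ∏ i ∈ Finset.Icc 1 n,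
        ∫ u in Set.Ioo (0:ℝ) 1, u ^ (2 * i - 2) * (w (Finv u) * f (Finv u))
      ≥ (n.factorial : ℝ) ^ 2 *
        (-(1/2 : ℝ) * (∫ u in Set.Ioo (0:ℝ) 1, w (Finv u) * f (Finv u)) ^ n)) := by
  have hΛ0 : ∀ u, 0 ≤ w (Finv u) * f (Finv u) := fun u => mul_nonneg (hw0 _) (hf0 _)
  have hmin := prod_setIntegral_pow_mul_le_pow (Finset.Icc 1 n) (fun i => 2 * i - 2)
    measurableSet_Ioo (h := fun u => 1 - u) hint hΛ0 (by fun_prop)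
    (fun u hu => sub_nonneg.2 hu.2.le) (fun u hu => sub_le_self 1 hu.1.le)
  have hmax := prod_setIntegral_pow_mul_le_pow (Finset.Icc 1 n) (fun i => 2 * i - 2)
    measurableSet_Ioo (h := fun u => u) hint hΛ0 continuous_id (fun u hu => hu.1.le) (fun u hu => hu.2.le)
  rw [Nat.card_Icc, add_tsub_cancel_right] at hmin hmax
  have hc : (0 : ℝ) ≤ (n.factorial : ℝ) ^ 2 / 2 := by positivity
  constructor
  · linarith [mul_le_mul_of_nonneg_left hmin hc]
  · linarith [mul_le_mul_of_nonneg_left hmax hc]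

/-- J^w(X_minRSSU^(n)) ≥ (n!)² J^w(X_SRS^(n)) and
J^w(X_maxRSSU^(n)) ≥ (n!)² J^w(X_SRS^(n)), where
J^w(X_SRS^(n)) = -(1/2)(∫₀¹ w(F⁻¹(u)) f(F⁻¹(u)) du)^n. -/
theorem gwj_rssu_vs_srs
    (n : ℕ) (f Finv w : ℝ → ℝ)
    (hf0 : ∀ x, 0 ≤ f x) (hw0 : ∀ x, 0 ≤ w x)
    (hmeas : Measurable fun u => w (Finv u) * f (Finv u))
    (hint : IntegrableOn (fun u => w (Finv u) * f (Finv u)) (Set.Ioo (0:ℝ) 1)) :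
    (-((n.factorial : ℝ) ^ 2 / 2) * ∏ i ∈ Finset.Icc 1 n,
        ∫ u in Set.Ioo (0:ℝ) 1, (1 - u) ^ (2 * i - 2) * (w (Finv u) * f (Finv u))
      ≥ (n.factorial : ℝ) ^ 2 *
        (-(1/2 : ℝ) * (∫ u in Set.Ioo (0:ℝ) 1, w (Finv u) * f (Finv u)) ^ n))
    ∧
    (-((n.factorial : ℝ) ^ 2 / 2) * ∏ i ∈ Finset.Icc 1 n,
        ∫ u in Set.Ioo (0:ℝ) 1, u ^ (2 * i - 2) * (w (Finv u) * f (Finv u))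
      ≥ (n.factorial : ℝ) ^ 2 *
        (-(1/2 : ℝ) * (∫ u in Set.Ioo (0:ℝ) 1, w (Finv u) * f (Finv u)) ^ n)) :=
  gwj_rssu_vs_srs_general n f Finv w hf0 hw0 hint
end

section
/- If X has mode m with 0 ≤ f(x) ≤ M for all x and 0 ≤ w(x) ≤ k, then J^w(X_minRSSU^(n)) ≥ -((n!)² kⁿ Mⁿ)/(2·(2n-1)!!) and J^w(X_maxRSSU^(n)) ≥ -((n!)² kⁿ Mⁿ)/(2·(2n-1)!!), where (2n-1)!! = ∏_{i=1}^n (2i-1). -/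
open MeasureTheory Finset

/-!
The kernel `(1 - u) ^ (2i - 2)` (resp. `u ^ (2i - 2)`) is nonnegative with integral `1 / (2i - 1)`
over `(0, 1)`, and `0 ≤ w ∘ F⁻¹ · f ∘ F⁻¹ ≤ k M`. Hence the `i`-th factor of the product lies in
`[0, k M / (2i - 1)]`, so the product is at most `kⁿ Mⁿ / (2n - 1)!!`; multiplying by the
nonpositive constant `-(n!)² / 2` reverses the inequality.
-/

lemma integral_mul_le_integral_mul_of_le {α : Type*} [MeasurableSpace α] {μ : Measure α}
    {p g : α → ℝ} {C : ℝ} (hp : Integrable p μ) (hp0 : ∀ x, 0 ≤ p x) (hg0 : ∀ x, 0 ≤ g x)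
    (hgC : ∀ x, g x ≤ C) :
    ∫ x, p x * g x ∂μ ≤ (∫ x, p x ∂μ) * C := by
  rw [← integral_mul_const]
  exact integral_mono_of_nonneg (.of_forall fun x => mul_nonneg (hp0 x) (hg0 x))
    (hp.mul_const C) (.of_forall fun x => mul_le_mul_of_nonneg_left (hgC x) (hp0 x))

lemma prod_le_pow_card_div_prod {ι : Type*} {s : Finset ι} {a d : ι → ℝ} {c : ℝ}
    (ha0 : ∀ i ∈ s, 0 ≤ a i) (had : ∀ i ∈ s, a i ≤ c / d i) :
    ∏ i ∈ s, a i ≤ c ^ s.card / ∏ i ∈ s, d i := by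
  rw [← prod_const, ← prod_div_distrib]
  exact prod_le_prod ha0 had

lemma setIntegral_Ioo_zero_one_pow (m : ℕ) : ∫ u in Set.Ioo (0 : ℝ) 1, u ^ m = 1 / (m + 1) := by
  rw [← integral_Ioc_eq_integral_Ioo, ← intervalIntegral.integral_of_le zero_le_one,
    integral_pow]
  simp

lemma setIntegral_Ioo_zero_one_one_sub_pow (m : ℕ) :
    ∫ u in Set.Ioo (0 : ℝ) 1, (1 - u) ^ m = 1 / (m + 1) := by
  rw [← integral_Ioc_eq_integral_Ioo, ← intervalIntegral.integral_of_le zero_le_one,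
    intervalIntegral.integral_comp_sub_left (fun x => x ^ m) 1, sub_self, sub_zero, integral_pow]
  simp

lemma cast_two_mul_sub_two_add_one {i : ℕ} (hi : 1 ≤ i) :
    ((2 * i - 2 : ℕ) : ℝ) + 1 = 2 * i - 1 := by
  rw [Nat.cast_sub (by omega)]
  push_cast
  ring

lemma neg_prod_setIntegral_kernel_mul_ge (n : ℕ) (p : ℕ → ℝ → ℝ) (g : ℝ → ℝ) {c : ℝ}
    (hp0 : ∀ i u, 0 ≤ p i u)
    (hp : ∀ i ∈ Icc 1 n, ∫ u in Set.Ioo (0 : ℝ) 1, p i u = 1 / (2 * i - 1))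
    (hg0 : ∀ u, 0 ≤ g u) (hgc : ∀ u, g u ≤ c) :
    -((n.factorial : ℝ) ^ 2 / 2) * ∏ i ∈ Icc 1 n, ∫ u in Set.Ioo (0 : ℝ) 1, p i u * g u
      ≥ -((n.factorial : ℝ) ^ 2 * c ^ n) / (2 * ∏ i ∈ Icc 1 n, (2 * (i : ℝ) - 1)) := by
  have hfactor : ∀ i ∈ Icc 1 n, ∫ u in Set.Ioo (0 : ℝ) 1, p i u * g u ≤ c / (2 * i - 1) := by
    intro i hi
    have hpos : (0 : ℝ) < 2 * i - 1 := by
      have : (1 : ℝ) ≤ i := by exact_mod_cast (mem_Icc.mp hi).1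
      linarith
    have hint : IntegrableOn (p i) (Set.Ioo 0 1) :=
      Integrable.of_integral_ne_zero (by rw [hp i hi]; positivity)
    calc ∫ u in Set.Ioo (0 : ℝ) 1, p i u * g u
        ≤ (∫ u in Set.Ioo (0 : ℝ) 1, p i u) * c :=
          integral_mul_le_integral_mul_of_le hint (hp0 i) hg0 hgc
      _ = c / (2 * i - 1) := by rw [hp i hi]; ring
  have hprod := prod_le_pow_card_div_prod
    (fun i _ => integral_nonneg fun u => mul_nonneg (hp0 i u) (hg0 u)) hfactor
  rw [Nat.card_Icc, Nat.add_sub_cancel] at hprod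
  calc -((n.factorial : ℝ) ^ 2 * c ^ n) / (2 * ∏ i ∈ Icc 1 n, (2 * (i : ℝ) - 1))
      = -((n.factorial : ℝ) ^ 2 / 2) * (c ^ n / ∏ i ∈ Icc 1 n, (2 * (i : ℝ) - 1)) := by ring
    _ ≤ _ := mul_le_mul_of_nonpos_left hprod (by simp only [neg_nonpos]; positivity)

/-- If 0 ≤ f ≤ M and 0 ≤ w ≤ k, then
J^w(X_minRSSU^(n)) ≥ -((n!)² kⁿ Mⁿ)/(2 (2n-1)!!) and likewise for maxRSSU,
where (2n-1)!! = ∏_{i=1}^n (2i-1). -/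
theorem gwj_mode_bound
    (n : ℕ) (f Finv w : ℝ → ℝ) (M k : ℝ)
    (hf0 : ∀ x, 0 ≤ f x) (hfM : ∀ x, f x ≤ M)
    (hw0 : ∀ x, 0 ≤ w x) (hwk : ∀ x, w x ≤ k) :
    (-((n.factorial : ℝ) ^ 2 / 2) * ∏ i ∈ Finset.Icc 1 n,
        ∫ u in Set.Ioo (0:ℝ) 1, (1 - u) ^ (2 * i - 2) * (w (Finv u) * f (Finv u))
      ≥ -((n.factorial : ℝ) ^ 2 * k ^ n * M ^ n) /
          (2 * ∏ i ∈ Finset.Icc 1 n, (2 * (i:ℝ) - 1)))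
    ∧
    (-((n.factorial : ℝ) ^ 2 / 2) * ∏ i ∈ Finset.Icc 1 n,
        ∫ u in Set.Ioo (0:ℝ) 1, u ^ (2 * i - 2) * (w (Finv u) * f (Finv u))
      ≥ -((n.factorial : ℝ) ^ 2 * k ^ n * M ^ n) /
          (2 * ∏ i ∈ Finset.Icc 1 n, (2 * (i:ℝ) - 1))) := by
  have hg0 (u : ℝ) : 0 ≤ w (Finv u) * f (Finv u) := mul_nonneg (hw0 _) (hf0 _)
  have hgc (u : ℝ) : w (Finv u) * f (Finv u) ≤ k * M :=
    mul_le_mul (hwk _) (hfM _) (hf0 _) ((hw0 0).trans (hwk 0))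
  have hkernel (i : ℕ) : Even (2 * i - 2) := ⟨i - 1, by omega⟩
  rw [mul_assoc _ (k ^ n), ← mul_pow]
  exact ⟨neg_prod_setIntegral_kernel_mul_ge n _ _ (fun i _ => (hkernel i).pow_nonneg _)
      (fun i hi => by
        rw [setIntegral_Ioo_zero_one_one_sub_pow, cast_two_mul_sub_two_add_one (mem_Icc.mp hi).1])
      hg0 hgc,
    neg_prod_setIntegral_kernel_mul_ge n _ _ (fun i _ => (hkernel i).pow_nonneg _)
      (fun i hi => by
        rw [setIntegral_Ioo_zero_one_pow, cast_two_mul_sub_two_add_one (mem_Icc.mp hi).1])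
      hg0 hgc⟩
end
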